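/- arXiv:2107.03710 — 3 statements merged into one kernel-verified Lean document; each statement's English description precedes it below -/
import Mathlib

section
/- In the formal power series ring ℚ[[t]], the identity (Σ_{d≥0} ((d+1)(d+2)/2) t^d (Σ_{j=0}^{d} (d+1−j) t^j))·(1−t)⁶(1−t²)³ = 1 − 3t² − 4t³ + 12t⁴ − 4t⁵ − 3t⁶ + t⁸ holds. -/
/-- The infinite sum `∑_{d ≥ 0} c_d · t^d · Q_d(t)` of power series, where the `d`-th term
has order at least `d`, encoded coefficient-wise: the coefficient of `t^n` only receives
contributions from the terms with `d ≤ n`. -/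
noncomputable def seriesSum (f : ℕ → PowerSeries ℚ) : PowerSeries ℚ :=
  PowerSeries.mk fun n => PowerSeries.coeff n (∑ d ∈ Finset.range (n + 1), f d)

namespace Stmt11Aux
open PowerSeries Finset

lemma coeff_X_pow_mul_zero (g : PowerSeries ℚ) {m d : ℕ} (h : m < d) :
    coeff m (X ^ d * g) = 0 := by
  rw [coeff_mul]
  refine Finset.sum_eq_zero fun p hp => ?_
  have h1 := Finset.HasAntidiagonal.antidiagonal.fst_le hp
  rw [coeff_X_pow, if_neg (by omega), zero_mul]

lemma sum_trunc {f : ℕ → PowerSeries ℚ} (hf : ∀ d, ∃ g, f d = X ^ d * g) {n M : ℕ}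
    (h : n < M) :
    coeff n (∑ d ∈ range M, f d) = coeff n (∑ d ∈ range (n + 1), f d) := by
  rw [map_sum, map_sum]
  refine (Finset.sum_subset (Finset.range_subset_range.2 h) fun d hd hd' => ?_).symm
  obtain ⟨g, hg⟩ := hf d
  rw [hg]
  exact coeff_X_pow_mul_zero g (by simp at hd hd' ⊢; omega)

lemma coeff_seriesSum (f : ℕ → PowerSeries ℚ) (n : ℕ) :
    coeff n (seriesSum f) = coeff n (∑ d ∈ range (n + 1), f d) := by
  simp [seriesSum]

lemma sS_mul (f : ℕ → PowerSeries ℚ) (hf : ∀ d, ∃ g, f d = X ^ d * g) (P : PowerSeries ℚ) :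
    seriesSum f * P = seriesSum fun d => f d * P := by
  ext n
  rw [coeff_seriesSum (fun d => f d * P) n, ← Finset.sum_mul, coeff_mul, coeff_mul]
  refine Finset.sum_congr rfl fun p hp => ?_
  have h1 := Finset.HasAntidiagonal.antidiagonal.fst_le hp
  congr 1
  rw [coeff_seriesSum f p.1]
  exact (sum_trunc hf (show p.1 < n + 1 by omega)).symm

lemma sS_split (a b c : ℕ → PowerSeries ℚ) :
    seriesSum (fun d => a d - b d + c d) = seriesSum a - seriesSum b + seriesSum c := by
  ext n
  simp [seriesSum, Finset.sum_add_distrib, Finset.sum_sub_distrib]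

noncomputable section
def e0 (m : ℚ) : ℚ := (m + 1) * (m + 2) / 2
def e1 (m : ℚ) : ℚ := m ^ 2 + 2 * m
def e2 (m : ℚ) : ℚ := (m ^ 2 + m) / 2
def EP (Y : PowerSeries ℚ) (m : ℚ) : PowerSeries ℚ :=
  PowerSeries.C (e0 m) - PowerSeries.C (e1 m) * Y + PowerSeries.C (e2 m) * Y ^ 2

def f0 (m : ℚ) : ℚ := 1 + 5 * m / 2 + 2 * m ^ 2 + m ^ 3 / 2
def f1 (m : ℚ) : ℚ := 2 - 2 * m - 9 * m ^ 2 / 2 - 3 * m ^ 3 / 2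
def f2 (m : ℚ) : ℚ := -m / 2 + 3 * m ^ 2 + 3 * m ^ 3 / 2
def f3 (m : ℚ) : ℚ := -(m ^ 2 + m ^ 3) / 2
def FP (Y : PowerSeries ℚ) (m : ℚ) : PowerSeries ℚ :=
  PowerSeries.C (f0 m) + PowerSeries.C (f1 m) * Y + PowerSeries.C (f2 m) * Y ^ 2
    + PowerSeries.C (f3 m) * Y ^ 3

lemma Cq {a b : ℚ} (h : a = b) : PowerSeries.C a = PowerSeries.C b := congrArg _ h

lemma psum3 (Y : PowerSeries ℚ) (M : ℕ) :
    (∑ d ∈ range M, PowerSeries.C (((d : ℚ) + 1) * ((d : ℚ) + 2) / 2) * Y ^ d) * (1 - Y) ^ 3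
      = 1 - Y ^ M * EP Y M := by
  induction M with
  | zero =>
    have h0 : EP Y 0 = 1 := by
      have : e0 0 = 1 := by norm_num [e0]
      simp [EP, this, e1, e2]
    simp [h0]
  | succ M ih =>
    rw [Finset.sum_range_succ, add_mul, ih]
    have hc : (((M + 1 : ℕ) : ℚ)) = (M : ℚ) + 1 := by push_cast; ring
    rw [hc]
    unfold EP
    have h1 : PowerSeries.C (e0 ((M : ℚ) + 1)) = 3 * PowerSeries.C (e0 (M : ℚ)) - PowerSeries.C (e1 (M : ℚ)) := by
      rw [Cq (show e0 ((M : ℚ) + 1) = 3 * e0 (M : ℚ) - e1 (M : ℚ) by unfold e0 e1; ring),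
        map_sub, map_mul, map_ofNat]
    have h2 : PowerSeries.C (e1 ((M : ℚ) + 1)) = 3 * PowerSeries.C (e0 (M : ℚ)) - PowerSeries.C (e2 (M : ℚ)) := by
      rw [Cq (show e1 ((M : ℚ) + 1) = 3 * e0 (M : ℚ) - e2 (M : ℚ) by unfold e0 e1 e2; ring),
        map_sub, map_mul, map_ofNat]
    have h3 : PowerSeries.C (e2 ((M : ℚ) + 1)) = PowerSeries.C (e0 (M : ℚ)) :=
      Cq (by unfold e0 e2; ring)
    have h0 : PowerSeries.C (((M : ℚ) + 1) * ((M : ℚ) + 2) / 2) = PowerSeries.C (e0 (M : ℚ)) :=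
      Cq (by unfold e0; ring)
    linear_combination (Y ^ M * (1 - Y) ^ 3) * h0 + Y ^ (M + 1) * h1 - Y ^ (M + 2) * h2 +
      Y ^ (M + 3) * h3

lemma psum4 (Y : PowerSeries ℚ) (M : ℕ) :
    (∑ d ∈ range M, PowerSeries.C (((d : ℚ) + 1) ^ 2 * ((d : ℚ) + 2) / 2) * Y ^ d) * (1 - Y) ^ 4
      = 1 + 2 * Y - Y ^ M * FP Y M := by
  induction M with
  | zero =>
    have a0 : f0 0 = 1 := by norm_num [f0]
    have a1 : f1 0 = 2 := by norm_num [f1]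
    simp [FP, a0, a1, f2, f3, map_ofNat]
    try ring
  | succ M ih =>
    rw [Finset.sum_range_succ, add_mul, ih]
    have hc : (((M + 1 : ℕ) : ℚ)) = (M : ℚ) + 1 := by push_cast; ring
    rw [hc]
    unfold FP
    have h0 : PowerSeries.C (((M : ℚ) + 1) ^ 2 * ((M : ℚ) + 2) / 2) = PowerSeries.C (f0 (M : ℚ)) :=
      Cq (by unfold f0; ring)
    have h1 : PowerSeries.C (f0 ((M : ℚ) + 1)) = PowerSeries.C (f1 (M : ℚ)) + 4 * PowerSeries.C (f0 (M : ℚ)) := by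
      rw [Cq (show f0 ((M : ℚ) + 1) = f1 (M : ℚ) + 4 * f0 (M : ℚ) by unfold f0 f1; ring),
        map_add, map_mul, map_ofNat]
    have h2 : PowerSeries.C (f1 ((M : ℚ) + 1)) = PowerSeries.C (f2 (M : ℚ)) - 6 * PowerSeries.C (f0 (M : ℚ)) := by
      rw [Cq (show f1 ((M : ℚ) + 1) = f2 (M : ℚ) - 6 * f0 (M : ℚ) by unfold f0 f1 f2; ring),
        map_sub, map_mul, map_ofNat]
    have h3 : PowerSeries.C (f2 ((M : ℚ) + 1)) = PowerSeries.C (f3 (M : ℚ)) + 4 * PowerSeries.C (f0 (M : ℚ)) := by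
      rw [Cq (show f2 ((M : ℚ) + 1) = f3 (M : ℚ) + 4 * f0 (M : ℚ) by unfold f0 f2 f3; ring),
        map_add, map_mul, map_ofNat]
    have h4 : PowerSeries.C (f3 ((M : ℚ) + 1)) = -PowerSeries.C (f0 (M : ℚ)) := by
      rw [Cq (show f3 ((M : ℚ) + 1) = -f0 (M : ℚ) by unfold f0 f3; ring), map_neg]
    linear_combination (Y ^ M * (1 - Y) ^ 4) * h0 + Y ^ (M + 1) * h1 + Y ^ (M + 2) * h2 +
      Y ^ (M + 3) * h3 + Y ^ (M + 4) * h4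

lemma Qlem (d : ℕ) :
    (1 - PowerSeries.X) ^ 2 *
        ∑ j ∈ range (d + 1), PowerSeries.C ((d : ℚ) + 1 - (j : ℚ)) * PowerSeries.X ^ j
      = PowerSeries.C ((d : ℚ) + 1) * (1 - PowerSeries.X) - PowerSeries.X
          + PowerSeries.X ^ (d + 2) := by
  induction d with
  | zero =>
    norm_num [Finset.sum_range_one]
    ring
  | succ d ih =>
    have hsummand : ∀ j ∈ range (d + 2),
        PowerSeries.C (((d + 1 : ℕ) : ℚ) + 1 - (j : ℚ)) * PowerSeries.X ^ j
          = PowerSeries.C ((d : ℚ) + 1 - (j : ℚ)) * PowerSeries.X ^ j + PowerSeries.X ^ j := by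
      intro j _
      rw [Cq (show ((d + 1 : ℕ) : ℚ) + 1 - (j : ℚ) = ((d : ℚ) + 1 - (j : ℚ)) + 1 by push_cast; ring),
        map_add, map_one, add_mul, one_mul]
    rw [Finset.sum_congr rfl hsummand, Finset.sum_add_distrib, Finset.sum_range_succ
      (fun j => PowerSeries.C ((d : ℚ) + 1 - (j : ℚ)) * PowerSeries.X ^ j)]
    have hlast : PowerSeries.C ((d : ℚ) + 1 - ((d + 1 : ℕ) : ℚ)) = 0 := by
      rw [Cq (show (d : ℚ) + 1 - ((d + 1 : ℕ) : ℚ) = 0 by push_cast; ring), map_zero]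
    have hgeom : (1 - PowerSeries.X) * ∑ j ∈ range (d + 2), (PowerSeries.X : PowerSeries ℚ) ^ j
        = 1 - PowerSeries.X ^ (d + 2) := by
      linear_combination (-1 : PowerSeries ℚ) * geom_sum_mul (PowerSeries.X : PowerSeries ℚ) (d + 2)
    have hC : PowerSeries.C (((d + 1 : ℕ) : ℚ) + 1) = PowerSeries.C ((d : ℚ) + 1) + 1 := by
      rw [Cq (show ((d + 1 : ℕ) : ℚ) + 1 = ((d : ℚ) + 1) + 1 by push_cast; ring), map_add, map_one]
    rw [hlast, hC]
    linear_combination ih + (1 - PowerSeries.X) * hgeom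

lemma L1 : seriesSum (fun d => PowerSeries.C (((d : ℚ) + 1) ^ 2 * ((d : ℚ) + 2) / 2)
      * PowerSeries.X ^ d) * (1 - PowerSeries.X) ^ 4 = 1 + 2 * PowerSeries.X := by
  rw [sS_mul _ (fun d => ⟨PowerSeries.C (((d : ℚ) + 1) ^ 2 * ((d : ℚ) + 2) / 2), by ring⟩)]
  ext n
  rw [coeff_seriesSum _ n, ← Finset.sum_mul, psum4 PowerSeries.X (n + 1), map_sub,
    coeff_X_pow_mul_zero _ (Nat.lt_succ_self n), sub_zero]

lemma L2 : seriesSum (fun d => PowerSeries.C (((d : ℚ) + 1) * ((d : ℚ) + 2) / 2)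
      * PowerSeries.X ^ (d + 1)) * (1 - PowerSeries.X) ^ 3 = PowerSeries.X := by
  rw [sS_mul _ (fun d => ⟨PowerSeries.C (((d : ℚ) + 1) * ((d : ℚ) + 2) / 2) * PowerSeries.X,
    by ring⟩)]
  ext n
  rw [coeff_seriesSum _ n]
  have hs : ∑ d ∈ range (n + 1), PowerSeries.C (((d : ℚ) + 1) * ((d : ℚ) + 2) / 2)
        * PowerSeries.X ^ (d + 1) * (1 - PowerSeries.X) ^ 3
      = PowerSeries.X * ((∑ d ∈ range (n + 1), PowerSeries.C (((d : ℚ) + 1) * ((d : ℚ) + 2) / 2)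
        * PowerSeries.X ^ d) * (1 - PowerSeries.X) ^ 3) := by
    rw [Finset.sum_mul, Finset.mul_sum]
    exact Finset.sum_congr rfl fun d _ => by ring
  rw [hs, psum3 PowerSeries.X (n + 1)]
  have hz : PowerSeries.X * (1 - PowerSeries.X ^ (n + 1) * EP PowerSeries.X ((n : ℚ) + 1))
      = PowerSeries.X - PowerSeries.X ^ (n + 1) * (PowerSeries.X * EP PowerSeries.X ((n : ℚ) + 1)) := by
    ring
  have hcast : (((n + 1 : ℕ) : ℚ)) = (n : ℚ) + 1 := by push_cast; ring
  rw [hcast, hz, map_sub, coeff_X_pow_mul_zero _ (Nat.lt_succ_self n), sub_zero]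

lemma L3 : seriesSum (fun d => PowerSeries.C (((d : ℚ) + 1) * ((d : ℚ) + 2) / 2)
      * (PowerSeries.X ^ d * PowerSeries.X ^ (d + 2))) * (1 - PowerSeries.X ^ 2) ^ 3
      = PowerSeries.X ^ 2 := by
  rw [sS_mul _ (fun d => ⟨PowerSeries.C (((d : ℚ) + 1) * ((d : ℚ) + 2) / 2)
    * PowerSeries.X ^ (d + 2), by ring⟩)]
  ext n
  rw [coeff_seriesSum _ n]
  have hs : ∑ d ∈ range (n + 1), PowerSeries.C (((d : ℚ) + 1) * ((d : ℚ) + 2) / 2)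
        * (PowerSeries.X ^ d * PowerSeries.X ^ (d + 2)) * (1 - PowerSeries.X ^ 2) ^ 3
      = PowerSeries.X ^ 2 * ((∑ d ∈ range (n + 1), PowerSeries.C (((d : ℚ) + 1) * ((d : ℚ) + 2) / 2)
        * (PowerSeries.X ^ 2) ^ d) * (1 - PowerSeries.X ^ 2) ^ 3) := by
    rw [Finset.sum_mul, Finset.mul_sum]
    exact Finset.sum_congr rfl fun d _ => by ring
  rw [hs, psum3 (PowerSeries.X ^ 2) (n + 1)]
  have hcast : (((n + 1 : ℕ) : ℚ)) = (n : ℚ) + 1 := by push_cast; ring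
  have hz : PowerSeries.X ^ 2 * (1 - (PowerSeries.X ^ 2) ^ (n + 1) * EP (PowerSeries.X ^ 2) ((n : ℚ) + 1))
      = PowerSeries.X ^ 2 - PowerSeries.X ^ (n + 1)
          * (PowerSeries.X ^ (n + 3) * EP (PowerSeries.X ^ 2) ((n : ℚ) + 1)) := by
    ring
  rw [hcast, hz, map_sub, coeff_X_pow_mul_zero _ (Nat.lt_succ_self n), sub_zero]

end
end Stmt11Aux

open Stmt11Aux Finset in
theorem stmt_11 :
    seriesSum (fun d : ℕ =>
        PowerSeries.C (((d : ℚ) + 1) * ((d : ℚ) + 2) / 2) * PowerSeries.X ^ d *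
          ∑ j ∈ Finset.range (d + 1),
            PowerSeries.C ((d : ℚ) + 1 - (j : ℚ)) * PowerSeries.X ^ j) *
        ((1 - PowerSeries.X) ^ 6 * (1 - PowerSeries.X ^ 2) ^ 3)
      = 1 - 3 * PowerSeries.X ^ 2 - 4 * PowerSeries.X ^ 3 + 12 * PowerSeries.X ^ 4
          - 4 * PowerSeries.X ^ 5 - 3 * PowerSeries.X ^ 6 + PowerSeries.X ^ 8 := by
  rw [sS_mul _ (fun d => ⟨PowerSeries.C (((d : ℚ) + 1) * ((d : ℚ) + 2) / 2) *
    ∑ j ∈ Finset.range (d + 1), PowerSeries.C ((d : ℚ) + 1 - (j : ℚ)) * PowerSeries.X ^ j,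
    by ring⟩)]
  have hpt : (fun d : ℕ =>
      (PowerSeries.C (((d : ℚ) + 1) * ((d : ℚ) + 2) / 2) * PowerSeries.X ^ d *
          ∑ j ∈ Finset.range (d + 1),
            PowerSeries.C ((d : ℚ) + 1 - (j : ℚ)) * PowerSeries.X ^ j) *
        ((1 - PowerSeries.X) ^ 6 * (1 - PowerSeries.X ^ 2) ^ 3))
      = fun d : ℕ =>
        (PowerSeries.C (((d : ℚ) + 1) ^ 2 * ((d : ℚ) + 2) / 2) * PowerSeries.X ^ d)
            * ((1 - PowerSeries.X) ^ 5 * (1 - PowerSeries.X ^ 2) ^ 3)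
          - (PowerSeries.C (((d : ℚ) + 1) * ((d : ℚ) + 2) / 2) * PowerSeries.X ^ (d + 1))
            * ((1 - PowerSeries.X) ^ 4 * (1 - PowerSeries.X ^ 2) ^ 3)
          + (PowerSeries.C (((d : ℚ) + 1) * ((d : ℚ) + 2) / 2)
              * (PowerSeries.X ^ d * PowerSeries.X ^ (d + 2)))
            * ((1 - PowerSeries.X) ^ 4 * (1 - PowerSeries.X ^ 2) ^ 3) := by
    funext d
    have hb : PowerSeries.C (((d : ℚ) + 1) * ((d : ℚ) + 2) / 2) * PowerSeries.C ((d : ℚ) + 1)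
        = PowerSeries.C (((d : ℚ) + 1) ^ 2 * ((d : ℚ) + 2) / 2) := by
      rw [← map_mul]
      exact Cq (by ring)
    linear_combination (PowerSeries.C (((d : ℚ) + 1) * ((d : ℚ) + 2) / 2) * PowerSeries.X ^ d
        * (1 - PowerSeries.X) ^ 4 * (1 - PowerSeries.X ^ 2) ^ 3) * Qlem d
      + (PowerSeries.X ^ d * (1 - PowerSeries.X) ^ 5 * (1 - PowerSeries.X ^ 2) ^ 3) * hb
  rw [hpt, sS_split,
    ← sS_mul _ (fun d => ⟨PowerSeries.C (((d : ℚ) + 1) ^ 2 * ((d : ℚ) + 2) / 2), by ring⟩),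
    ← sS_mul _ (fun d => ⟨PowerSeries.C (((d : ℚ) + 1) * ((d : ℚ) + 2) / 2) * PowerSeries.X,
      by ring⟩),
    ← sS_mul _ (fun d => ⟨PowerSeries.C (((d : ℚ) + 1) * ((d : ℚ) + 2) / 2)
      * PowerSeries.X ^ (d + 2), by ring⟩)]
  linear_combination ((1 - PowerSeries.X) * (1 - PowerSeries.X ^ 2) ^ 3) * L1
    - ((1 - PowerSeries.X) * (1 - PowerSeries.X ^ 2) ^ 3) * L2
    + ((1 - PowerSeries.X) ^ 4) * L3
end

section
/- In the formal power series ring ℚ[[t]], the identity (Σ_{d≥0} ((d+1)(d+2)/2) t^d (Σ_{j=0}^{d} (j+1) t^j))·(1−t)³(1−t²)⁶ = 1 − 6t³ − t⁴ + 12t⁵ − t⁶ − 6t⁷ + t¹⁰ holds. -/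
open PowerSeries Finset


def AA (n q : ℚ) : ℚ := 1 + 7/12*q - 5/8*q^2 - 1/12*q^3 + 1/8*q^4 + 3/2*n + 19/12*n*q
  - 1/4*n*q^2 - 1/3*n*q^3 + 1/2*n^2 + 3/4*n^2*q + 1/4*n^2*q^2

lemma sumA (n : ℚ) : ∀ q : ℕ, ∑ j ∈ range (q+1), ((j:ℚ)+1)*(n-j+1)*(n-j+2)/2 = AA n q := by
  intro q
  induction q with
  | zero => simp [AA]; ring
  | succ k ih => rw [Finset.sum_range_succ, ih]; push_cast [AA]; ring

noncomputable def aa (n : ℕ) : ℚ := AA n (n/2 : ℕ)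

lemma key (c b : ℚ) (d j : ℕ) :
    (C c * X^d) * (C b * X^j) = C (c*b) * X^(d+j) := by
  rw [pow_add, map_mul]; ring

lemma coeffS (n : ℕ) :
    PowerSeries.coeff n (seriesSum (fun d : ℕ =>
        PowerSeries.C (((d : ℚ) + 1) * ((d : ℚ) + 2) / 2) * PowerSeries.X ^ d *
          ∑ j ∈ Finset.range (d + 1),
            PowerSeries.C ((j : ℚ) + 1) * PowerSeries.X ^ j)) = aa n := by
  rw [seriesSum, coeff_mk, map_sum]
  have step1 : ∀ d ∈ range (n+1),
      PowerSeries.coeff n (PowerSeries.C (((d : ℚ) + 1) * ((d : ℚ) + 2) / 2) * PowerSeries.X ^ d *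
          ∑ j ∈ Finset.range (d + 1), PowerSeries.C ((j : ℚ) + 1) * PowerSeries.X ^ j)
      = if n - d ≤ d then (((d:ℚ)+1)*((d:ℚ)+2)/2) * ((n:ℚ)-d+1) else 0 := by
    intro d hd
    rw [Finset.mem_range] at hd
    have hdn : d ≤ n := by omega
    rw [Finset.mul_sum, map_sum]
    have : ∀ j ∈ range (d+1),
        PowerSeries.coeff n (PowerSeries.C (((d : ℚ) + 1) * ((d : ℚ) + 2) / 2) * PowerSeries.X ^ d *
          (PowerSeries.C ((j : ℚ) + 1) * PowerSeries.X ^ j))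
        = if j = n - d then (((d:ℚ)+1)*((d:ℚ)+2)/2) * ((j:ℚ)+1) else 0 := by
      intro j hj
      rw [key, PowerSeries.coeff_C_mul, PowerSeries.coeff_X_pow]
      by_cases h : n = d + j
      · rw [if_pos h, if_pos (by omega), mul_one]
      · rw [if_neg h, if_neg (by omega), mul_zero]
    rw [Finset.sum_congr rfl this, Finset.sum_ite_eq' (range (d+1))]
    simp only [Finset.mem_range]
    split_ifs with h1 h2 h3
    · rw [Nat.cast_sub hdn]
    · omega
    · omega
    · rfl
  rw [Finset.sum_congr rfl step1, ← Finset.sum_range_reflect]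
  simp only [Nat.add_sub_cancel]
  have step2 : ∀ j ∈ range (n+1),
      (if n - (n - j) ≤ n - j then (((n-j:ℕ):ℚ)+1)*(((n-j:ℕ):ℚ)+2)/2*((n:ℚ)-((n-j:ℕ):ℚ)+1) else 0)
      = (if j ≤ n/2 then ((j:ℚ)+1)*((n:ℚ)-(j:ℚ)+1)*((n:ℚ)-(j:ℚ)+2)/2 else 0) := by
    intro j hj
    rw [Finset.mem_range] at hj
    have hjn : j ≤ n := by omega
    rw [Nat.cast_sub hjn, show n - (n - j) = j from by omega]
    split_ifs with h1 h2 h3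
    · ring
    · omega
    · omega
    · rfl
  rw [Finset.sum_congr rfl step2]
  rw [← Finset.sum_subset (Finset.range_subset_range.mpr (show n/2+1 ≤ n+1 by omega))
      (fun x _ hx => by
        rw [Finset.mem_range] at hx
        rw [if_neg (by omega)])]
  have final : ∑ j ∈ range (n/2+1), (if j ≤ n/2 then ((j:ℚ)+1)*((n:ℚ)-(j:ℚ)+1)*((n:ℚ)-(j:ℚ)+2)/2 else 0)
      = ∑ j ∈ range (n/2+1), ((j:ℚ)+1)*((n:ℚ)-(j:ℚ)+1)*((n:ℚ)-(j:ℚ)+2)/2 :=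
    Finset.sum_congr rfl (fun j hj => if_pos (by rw [Finset.mem_range] at hj; omega))
  rw [final, sumA]
  rfl

lemma Dexp : (1 - X)^3*(1-(X:ℚ⟦X⟧)^2)^6 = C 1 - C 3*X - C 3*X^2 + C 17*X^3 - C 3*X^4
    - C 39*X^5 + C 25*X^6 + C 45*X^7 - C 45*X^8 - C 25*X^9 + C 39*X^10
    + C 3*X^11 - C 17*X^12 + C 3*X^13 + C 3*X^14 - C 1*X^15 := by
  simp only [map_one, map_ofNat]
  ring

lemma Nexp : (1 - 6*X^3 - X^4 + 12*X^5 - X^6 - 6*X^7 + (X:ℚ⟦X⟧)^10 : ℚ⟦X⟧)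
    = C 1 - C 6*X^3 - C 1*X^4 + C 12*X^5 - C 1*X^6 - C 6*X^7 + C 1*X^10 := by
  simp only [map_one, map_ofNat]
  ring

lemma ddbig (k : ℕ) (h : 16 ≤ k) : PowerSeries.coeff k ((1 - X)^3*(1-(X:ℚ⟦X⟧)^2)^6) = 0 := by
  rw [Dexp]
  simp [PowerSeries.coeff_X_pow, PowerSeries.coeff_X, PowerSeries.coeff_C_mul,
    show k ≠ 0 by omega, show k ≠ 1 by omega, show k ≠ 2 by omega, show k ≠ 3 by omega,
    show k ≠ 4 by omega, show k ≠ 5 by omega, show k ≠ 6 by omega, show k ≠ 7 by omega,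
    show k ≠ 8 by omega, show k ≠ 9 by omega, show k ≠ 10 by omega, show k ≠ 11 by omega,
    show k ≠ 12 by omega, show k ≠ 13 by omega, show k ≠ 14 by omega, show k ≠ 15 by omega]

set_option maxHeartbeats 2000000 in
theorem stmt_13 :
    seriesSum (fun d : ℕ =>
        PowerSeries.C (((d : ℚ) + 1) * ((d : ℚ) + 2) / 2) * PowerSeries.X ^ d *
          ∑ j ∈ Finset.range (d + 1),
            PowerSeries.C ((j : ℚ) + 1) * PowerSeries.X ^ j) *
        ((1 - PowerSeries.X) ^ 3 * (1 - PowerSeries.X ^ 2) ^ 6)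
      = 1 - 6 * PowerSeries.X ^ 3 - PowerSeries.X ^ 4 + 12 * PowerSeries.X ^ 5
          - PowerSeries.X ^ 6 - 6 * PowerSeries.X ^ 7 + PowerSeries.X ^ 10 := by
  have hS : seriesSum (fun d : ℕ =>
      PowerSeries.C (((d : ℚ) + 1) * ((d : ℚ) + 2) / 2) * PowerSeries.X ^ d *
        ∑ j ∈ Finset.range (d + 1),
          PowerSeries.C ((j : ℚ) + 1) * PowerSeries.X ^ j) = PowerSeries.mk aa :=
    PowerSeries.ext fun n => by rw [coeffS, PowerSeries.coeff_mk]
  rw [hS, mul_comm, Nexp]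
  ext n
  rw [PowerSeries.coeff_mul, Finset.Nat.sum_antidiagonal_eq_sum_range_succ_mk]
  simp only [PowerSeries.coeff_mk]
  rcases lt_or_ge n 16 with hn | hn
  · interval_cases n <;>
      norm_num [Dexp, Finset.sum_range_succ, PowerSeries.coeff_C_mul, PowerSeries.coeff_C,
        PowerSeries.coeff_X, PowerSeries.coeff_X_pow, aa, AA]
  · obtain ⟨v, rfl⟩ : ∃ v, n = v + 16 := ⟨n - 16, by omega⟩
    rw [← Finset.sum_subset (Finset.range_subset_range.mpr (by omega : (16:ℕ) ≤ v + 16 + 1))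
        (fun k _ hk2 => by
          rw [Finset.mem_range] at hk2
          rw [ddbig k (by omega), zero_mul])]
    rw [Dexp]
    simp only [Finset.sum_range_succ, Finset.sum_range_zero, map_sub, map_add,
      PowerSeries.coeff_C_mul, PowerSeries.coeff_C, PowerSeries.coeff_X, PowerSeries.coeff_X_pow]
    obtain ⟨u, rfl⟩ | ⟨u, rfl⟩ := Nat.even_or_odd v
    · simp only [aa, show u+u+16-0 = u+u+16 from by omega, show u+u+16-1 = u+u+15 from by omega, show u+u+16-2 = u+u+14 from by omega, show u+u+16-3 = u+u+13 from by omega, show u+u+16-4 = u+u+12 from by omega, show u+u+16-5 = u+u+11 from by omega, show u+u+16-6 = u+u+10 from by omega, show u+u+16-7 = u+u+9 from by omega, show u+u+16-8 = u+u+8 from by omega, show u+u+16-9 = u+u+7 from by omega, show u+u+16-10 = u+u+6 from by omega, show u+u+16-11 = u+u+5 from by omega, show u+u+16-12 = u+u+4 from by omega, show u+u+16-13 = u+u+3 from by omega, show u+u+16-14 = u+u+2 from by omega, show u+u+16-15 = u+u+1 from by omega, show (u+u+16)/2 = u+8 from by omega, show (u+u+15)/2 = u+7 from by omega, show (u+u+14)/2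 = u+7 from by omega, show (u+u+13)/2 = u+6 from by omega, show (u+u+12)/2 = u+6 from by omega, show (u+u+11)/2 = u+5 from by omega, show (u+u+10)/2 = u+5 from by omega, show (u+u+9)/2 = u+4 from by omega, show (u+u+8)/2 = u+4 from by omega, show (u+u+7)/2 = u+3 from by omega, show (u+u+6)/2 = u+3 from by omega, show (u+u+5)/2 = u+2 from by omega, show (u+u+4)/2 = u+2 from by omega, show (u+u+3)/2 = u+1 from by omega, show (u+u+2)/2 = u+1 from by omega, show (u+u+1)/2 = u+0 from by omega]
      simp only [show ¬(u+u+16 = 0) from by omega, show ¬(u+u+16 = 3) from by omega, show ¬(u+u+16 = 4) from by omega, show ¬(u+u+16 = 5) from by omega, show ¬(u+u+16 = 6) from by omega, show ¬(u+u+16 = 7) from by omega, show ¬(u+u+16 = 10) from by omega]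
      norm_num
      push_cast
      simp only [AA]
      ring
    · simp only [aa, show 2*u+1+16 = u+u+17 from by omega, show u+u+17-0 = u+u+17 from by omega, show u+u+17-1 = u+u+16 from by omega, show u+u+17-2 = u+u+15 from by omega, show u+u+17-3 = u+u+14 from by omega, show u+u+17-4 = u+u+13 from by omega, show u+u+17-5 = u+u+12 from by omega, show u+u+17-6 = u+u+11 from by omega, show u+u+17-7 = u+u+10 from by omega, show u+u+17-8 = u+u+9 from by omega, show u+u+17-9 = u+u+8 from by omega, show u+u+17-10 = u+u+7 from by omega, show u+u+17-11 = u+u+6 from by omega, show u+u+17-12 = u+u+5 from by omega, show u+u+17-13 = u+u+4 from by omega, show u+u+17-14 = u+u+3 from by omega, show u+u+17-15 = u+u+2 from by omega, show (u+u+17)/2 = u+8 from by omega, show (u+u+16)/2 = u+8 from by omega, show (u+u+15)/2 = u+7 from by omega, show (u+u+14)/2 = u+7 from by omega, show (u+u+13)/2 = u+6 from by omega, show (u+u+12)/2 = u+6 from by omega, show (u+u+11)/2 = u+5 from by omega, show (u+u+10)/2 = u+5 from by omega, show (u+u+9)/2 = u+4 from by omega, show (u+u+8)/2 = u+4 from by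 omega, show (u+u+7)/2 = u+3 from by omega, show (u+u+6)/2 = u+3 from by omega, show (u+u+5)/2 = u+2 from by omega, show (u+u+4)/2 = u+2 from by omega, show (u+u+3)/2 = u+1 from by omega, show (u+u+2)/2 = u+1 from by omega]
      simp only [show ¬(u+u+17 = 0) from by omega, show ¬(u+u+17 = 3) from by omega, show ¬(u+u+17 = 4) from by omega, show ¬(u+u+17 = 5) from by omega, show ¬(u+u+17 = 6) from by omega, show ¬(u+u+17 = 7) from by omega, show ¬(u+u+17 = 10) from by omega]
      norm_num
      push_cast
      simp only [AA]
      ring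
end

section
/- In the formal power series ring ℚ[[t]], the identity (Σ_{d≥0} t^d (Σ_{j=0}^{d} (d+1−j) t^j)²)·(1−t)⁴(1−t²)⁴(1−t³) = 1 − t² − 4t³ + 8t⁵ − 4t⁷ − t⁸ + t¹⁰ holds. -/
open PowerSeries Finset

lemma coeff_seriesSum (f : ℕ → PowerSeries ℚ) (n : ℕ) :
    coeff n (seriesSum f) = ∑ d ∈ Finset.range (n + 1), coeff n (f d) := by
  simp [seriesSum]

lemma seriesSum_add (f g : ℕ → PowerSeries ℚ) :
    seriesSum (fun d => f d + g d) = seriesSum f + seriesSum g := by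
  ext n
  simp [coeff_seriesSum, Finset.sum_add_distrib]

lemma seriesSum_mul (f : ℕ → PowerSeries ℚ) (A : PowerSeries ℚ)
    (hf : ∀ d n, n < d → coeff n (f d) = 0) :
    seriesSum f * A = seriesSum (fun d => f d * A) := by
  ext n
  rw [coeff_mul, coeff_seriesSum]
  have step : ∀ p ∈ antidiagonal n,
      coeff p.1 (seriesSum f) * coeff p.2 A
        = ∑ d ∈ range (n + 1), coeff p.1 (f d) * coeff p.2 A := by
    intro p hp
    rw [coeff_seriesSum, Finset.sum_mul]
    apply Finset.sum_subset
    · refine Finset.range_subset_range.2 ?_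
      have := Finset.HasAntidiagonal.mem_antidiagonal.mp hp
      omega
    · intro d hd hd2
      have hlt : p.1 < d := by
        simp only [Finset.mem_range] at hd hd2
        omega
      rw [hf d p.1 hlt, zero_mul]
  rw [Finset.sum_congr rfl step, Finset.sum_comm]
  exact Finset.sum_congr rfl fun d _ => (coeff_mul _ _ _).symm

noncomputable def Sb (a : ℕ → ℚ) (m : ℕ) : PowerSeries ℚ :=
  seriesSum fun d => PowerSeries.C (a d) * PowerSeries.X ^ (m * d)

lemma coeff_Sb (a : ℕ → ℚ) (m : ℕ) (hm : 0 < m) (n : ℕ) :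
    coeff n (Sb a m) = if m ∣ n then a (n / m) else 0 := by
  rw [Sb, coeff_seriesSum]
  simp only [map_mul, coeff_C_mul, coeff_X_pow, mul_ite, mul_one, mul_zero]
  by_cases h : m ∣ n
  · obtain ⟨k, rfl⟩ := h
    rw [if_pos ⟨k, rfl⟩, Nat.mul_div_cancel_left k hm]
    rw [Finset.sum_eq_single_of_mem k (Finset.mem_range.2 (by
      have := Nat.le_mul_of_pos_left k hm; omega))]
    · rw [if_pos rfl]
    · intro d _ hdk
      exact if_neg fun hmd => hdk (Nat.eq_of_mul_eq_mul_left hm hmd.symm)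
  · rw [if_neg h]
    exact Finset.sum_eq_zero fun d _ => if_neg fun hnd => h ⟨d, hnd⟩

lemma base_order (a : ℕ → ℚ) (m : ℕ) (hm : 0 < m) :
    ∀ d n, n < d → coeff n (PowerSeries.C (a d) * PowerSeries.X ^ (m * d)) = 0 := by
  intro d n hn
  rw [coeff_C_mul, coeff_X_pow, if_neg (by
    have := Nat.le_mul_of_pos_left d hm; omega), mul_zero]

lemma coeff_Sb1 (a : ℕ → ℚ) (k : ℕ) : PowerSeries.coeff k (Sb a 1) = a k := by
  rw [coeff_Sb a 1 one_pos, if_pos (one_dvd k), Nat.div_one]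

lemma cubic_id (a : ℕ → ℚ) (h : ∀ n, a (n + 3) - 3 * a (n + 2) + 3 * a (n + 1) - a n = 0) :
    Sb a 1 * (1 - PowerSeries.X) ^ 3
      = PowerSeries.C (a 0) + PowerSeries.C (a 1 - 3 * a 0) * PowerSeries.X ^ 1
        + PowerSeries.C (a 2 - 3 * a 1 + 3 * a 0) * PowerSeries.X ^ 2 := by
  have key : Sb a 1 * (1 - PowerSeries.X) ^ 3
      = Sb a 1 - PowerSeries.C 3 * (Sb a 1 * PowerSeries.X ^ 1)
        + PowerSeries.C 3 * (Sb a 1 * PowerSeries.X ^ 2)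
        - Sb a 1 * PowerSeries.X ^ 3 := by
    rw [map_ofNat]; ring
  rw [key]
  ext n
  simp only [map_sub, map_add, PowerSeries.coeff_C_mul, PowerSeries.coeff_mul_X_pow',
    coeff_Sb1, PowerSeries.coeff_C, PowerSeries.coeff_X_pow, mul_ite, mul_one, mul_zero]
  match n with
  | 0 => norm_num
  | 1 => norm_num
  | 2 => norm_num
  | (n + 3) =>
    have e1 : n + 3 - 1 = n + 2 := by omega
    have e2 : n + 3 - 2 = n + 1 := by omega
    have e3 : n + 3 - 3 = n := by omega
    rw [e1, e2, e3]
    simp only [if_pos (show 1 ≤ n + 3 by omega), if_pos (show 2 ≤ n + 3 by omega),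
      if_pos (show 3 ≤ n + 3 by omega), if_neg (show ¬(n + 2 = 0) by omega),
      if_neg (show ¬(n + 1 = 0) by omega), if_neg (show ¬(n + 3 = 0) by omega)]
    have := h n
    linarith

lemma quad_id (a : ℕ → ℚ) (h : ∀ n, a (n + 2) - 2 * a (n + 1) + a n = 0) :
    Sb a 2 * (1 - PowerSeries.X ^ 2) ^ 2
      = PowerSeries.C (a 0) + PowerSeries.C (a 1 - 2 * a 0) * PowerSeries.X ^ 2 := by
  have key : Sb a 2 * (1 - PowerSeries.X ^ 2) ^ 2
      = Sb a 2 - PowerSeries.C 2 * (Sb a 2 * PowerSeries.X ^ 2)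
        + Sb a 2 * PowerSeries.X ^ 4 := by
    rw [map_ofNat]; ring
  rw [key]
  ext n
  simp only [map_sub, map_add, PowerSeries.coeff_C_mul, PowerSeries.coeff_mul_X_pow',
    coeff_Sb a 2 two_pos, PowerSeries.coeff_C, PowerSeries.coeff_X_pow,
    mul_ite, mul_one, mul_zero]
  match n with
  | 0 => norm_num
  | 1 => norm_num
  | 2 => norm_num
  | 3 => norm_num
  | (n + 4) =>
    have e1 : n + 4 - 2 = n + 2 := by omega
    have e2 : n + 4 - 4 = n := by omega
    have d2 : (n + 2) / 2 = n / 2 + 1 := Nat.add_div_right n two_pos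
    have d1 : (n + 4) / 2 = n / 2 + 2 := by
      rw [show n + 4 = n + 2 + 2 from rfl, Nat.add_div_right _ two_pos, d2]
    have hd4 : (2 ∣ n + 4) ↔ (2 ∣ n) := by
      rw [show n + 4 = n + 2 + 2 from rfl, Nat.dvd_add_self_right, Nat.dvd_add_self_right]
    have hd2 : (2 ∣ n + 2) ↔ (2 ∣ n) := Nat.dvd_add_self_right
    rw [e1, e2]
    simp only [if_pos (show 2 ≤ n + 4 by omega), if_pos (show 4 ≤ n + 4 by omega),
      if_neg (show ¬(n + 2 = 0) by omega), if_neg (show ¬(n + 4 = 0) by omega), d1, d2]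
    by_cases hd : 2 ∣ n
    · simp only [if_pos (hd4.mpr hd), if_pos (hd2.mpr hd), if_pos hd]
      have := h (n / 2)
      linarith
    · simp only [if_neg (fun hx => hd (hd4.mp hx)), if_neg (fun hx => hd (hd2.mp hx)),
        if_neg hd]
      ring

lemma geom3_id : Sb (fun _ => 1) 3 * (1 - PowerSeries.X ^ 3) = 1 := by
  have key : Sb (fun _ => 1) 3 * (1 - PowerSeries.X ^ 3)
      = Sb (fun _ => 1) 3 - Sb (fun _ => 1) 3 * PowerSeries.X ^ 3 := by ring
  rw [key]
  ext n
  simp only [map_sub, PowerSeries.coeff_mul_X_pow', coeff_Sb _ 3 three_pos,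
    PowerSeries.coeff_one]
  match n with
  | 0 => norm_num
  | 1 => norm_num
  | 2 => norm_num
  | (n + 3) =>
    have e1 : n + 3 - 3 = n := by omega
    have hd : (3 ∣ n + 3) ↔ (3 ∣ n) := Nat.dvd_add_self_right
    rw [e1]
    simp only [if_pos (show 3 ≤ n + 3 by omega), if_neg (show ¬(n + 3 = 0) by omega)]
    by_cases h3 : 3 ∣ n
    · simp only [if_pos (hd.mpr h3), if_pos h3]; ring
    · simp only [if_neg (fun hx => h3 (hd.mp hx)), if_neg h3]; ring

open PowerSeries in
lemma P_mul (d : ℕ) :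
    (∑ j ∈ Finset.range (d + 1), PowerSeries.C ((d : ℚ) + 1 - (j : ℚ)) * PowerSeries.X ^ j)
        * (1 - PowerSeries.X) ^ 2
      = PowerSeries.C ((d : ℚ) + 1) - PowerSeries.C ((d : ℚ) + 2) * PowerSeries.X
        + PowerSeries.X ^ (d + 2) := by
  induction d with
  | zero =>
    simp only [Nat.cast_zero, Finset.range_one, Finset.sum_singleton, pow_zero, mul_one]
    norm_num
    rw [map_ofNat]
    try ring
  | succ d ih =>
    have h1 : ∀ j ∈ Finset.range (d + 1 + 1),
        PowerSeries.C ((↑(d + 1) : ℚ) + 1 - (j : ℚ)) * PowerSeries.X ^ j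
          = PowerSeries.C ((d : ℚ) + 1 - (j : ℚ)) * PowerSeries.X ^ j + PowerSeries.X ^ j := by
      intro j _
      push_cast
      rw [show (d : ℚ) + 1 + 1 - (j : ℚ) = ((d : ℚ) + 1 - (j : ℚ)) + 1 by ring, map_add, map_one]
      ring
    have hsplit : (∑ j ∈ Finset.range (d + 1 + 1),
          PowerSeries.C ((↑(d + 1) : ℚ) + 1 - (j : ℚ)) * PowerSeries.X ^ j)
        = (∑ j ∈ Finset.range (d + 1),
            PowerSeries.C ((d : ℚ) + 1 - (j : ℚ)) * PowerSeries.X ^ j)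
          + ∑ j ∈ Finset.range (d + 1 + 1), PowerSeries.X ^ j := by
      rw [Finset.sum_congr rfl h1, Finset.sum_add_distrib,
        Finset.sum_range_succ (fun j => PowerSeries.C ((d : ℚ) + 1 - (j : ℚ)) * PowerSeries.X ^ j)]
      push_cast
      norm_num
    have geom : (∑ j ∈ Finset.range (d + 1 + 1), (PowerSeries.X : PowerSeries ℚ) ^ j)
        * (1 - PowerSeries.X) = 1 - PowerSeries.X ^ (d + 1 + 1) := by
      have hg := geom_sum_mul (PowerSeries.X : PowerSeries ℚ) (d + 1 + 1)
      have h2 : (∑ j ∈ Finset.range (d + 1 + 1), (PowerSeries.X : PowerSeries ℚ) ^ j)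
          * (1 - PowerSeries.X)
          = -((∑ j ∈ Finset.range (d + 1 + 1), (PowerSeries.X : PowerSeries ℚ) ^ j)
              * (PowerSeries.X - 1)) := by ring
      rw [h2, hg]; ring
    rw [hsplit, add_mul, ih, show ((1 : PowerSeries ℚ) - PowerSeries.X) ^ 2
        = (1 - PowerSeries.X) * (1 - PowerSeries.X) from sq _, ← mul_assoc, geom]
    push_cast
    simp only [map_add, map_one, map_ofNat]
    have hx1 : (PowerSeries.X : PowerSeries ℚ) ^ (d + 1 + 2)
        = PowerSeries.X ^ (d + 2) * PowerSeries.X := by ring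
    have hx2 : (PowerSeries.X : PowerSeries ℚ) ^ (d + 1 + 1)
        = PowerSeries.X ^ (d + 2) := by ring_nf
    rw [hx1, hx2]
    try ring

noncomputable def Efac : PowerSeries ℚ :=
  (1 - PowerSeries.X ^ 2) ^ 4 * (1 - PowerSeries.X ^ 3)

def a1 (d : ℕ) : ℚ := ((d : ℚ) + 1) ^ 2
def a2 (d : ℕ) : ℚ := -2 * ((d : ℚ) + 1) * ((d : ℚ) + 2)
def a3 (d : ℕ) : ℚ := ((d : ℚ) + 2) ^ 2
def a4 (d : ℕ) : ℚ := 2 * ((d : ℚ) + 1)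
def a5 (d : ℕ) : ℚ := -2 * ((d : ℚ) + 2)

noncomputable def g1 (d : ℕ) : PowerSeries ℚ :=
  PowerSeries.C (a1 d) * PowerSeries.X ^ (1 * d) * Efac
noncomputable def g2 (d : ℕ) : PowerSeries ℚ :=
  PowerSeries.C (a2 d) * PowerSeries.X ^ (1 * d) * (PowerSeries.X * Efac)
noncomputable def g3 (d : ℕ) : PowerSeries ℚ :=
  PowerSeries.C (a3 d) * PowerSeries.X ^ (1 * d) * (PowerSeries.X ^ 2 * Efac)
noncomputable def g4 (d : ℕ) : PowerSeries ℚ :=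
  PowerSeries.C (a4 d) * PowerSeries.X ^ (2 * d) * (PowerSeries.X ^ 2 * Efac)
noncomputable def g5 (d : ℕ) : PowerSeries ℚ :=
  PowerSeries.C (a5 d) * PowerSeries.X ^ (2 * d) * (PowerSeries.X ^ 3 * Efac)
noncomputable def g6 (d : ℕ) : PowerSeries ℚ :=
  PowerSeries.C ((fun _ : ℕ => (1 : ℚ)) d) * PowerSeries.X ^ (3 * d)
    * (PowerSeries.X ^ 4 * Efac)

theorem stmt_15 :
    seriesSum (fun d : ℕ =>
        PowerSeries.X ^ d *
          (∑ j ∈ Finset.range (d + 1),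
            PowerSeries.C ((d : ℚ) + 1 - (j : ℚ)) * PowerSeries.X ^ j) ^ 2) *
        ((1 - PowerSeries.X) ^ 4 * (1 - PowerSeries.X ^ 2) ^ 4 * (1 - PowerSeries.X ^ 3))
      = 1 - PowerSeries.X ^ 2 - 4 * PowerSeries.X ^ 3 + 8 * PowerSeries.X ^ 5
          - 4 * PowerSeries.X ^ 7 - PowerSeries.X ^ 8 + PowerSeries.X ^ 10 := by
  set D : PowerSeries ℚ :=
    (1 - PowerSeries.X) ^ 4 * (1 - PowerSeries.X ^ 2) ^ 4 * (1 - PowerSeries.X ^ 3) with hD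
  have horder : ∀ d n, n < d →
      PowerSeries.coeff n (PowerSeries.X ^ d *
        (∑ j ∈ Finset.range (d + 1),
          PowerSeries.C ((d : ℚ) + 1 - (j : ℚ)) * PowerSeries.X ^ j) ^ 2) = 0 := by
    intro d n hn
    rw [PowerSeries.coeff_X_pow_mul', if_neg (by omega)]
  have step1 : seriesSum (fun d : ℕ =>
        PowerSeries.X ^ d *
          (∑ j ∈ Finset.range (d + 1),
            PowerSeries.C ((d : ℚ) + 1 - (j : ℚ)) * PowerSeries.X ^ j) ^ 2) * D
      = seriesSum (fun d : ℕ =>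
          PowerSeries.X ^ d *
            (∑ j ∈ Finset.range (d + 1),
              PowerSeries.C ((d : ℚ) + 1 - (j : ℚ)) * PowerSeries.X ^ j) ^ 2 * D) :=
    seriesSum_mul _ _ horder
  rw [step1]
  have hfd : (fun d : ℕ =>
        PowerSeries.X ^ d *
          (∑ j ∈ Finset.range (d + 1),
            PowerSeries.C ((d : ℚ) + 1 - (j : ℚ)) * PowerSeries.X ^ j) ^ 2 * D)
      = fun d : ℕ => g1 d + (g2 d + (g3 d + (g4 d + (g5 d + g6 d)))) := by
    funext d
    have hq := P_mul d
    calc PowerSeries.X ^ d *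
          (∑ j ∈ Finset.range (d + 1),
            PowerSeries.C ((d : ℚ) + 1 - (j : ℚ)) * PowerSeries.X ^ j) ^ 2 * D
        = ((∑ j ∈ Finset.range (d + 1),
            PowerSeries.C ((d : ℚ) + 1 - (j : ℚ)) * PowerSeries.X ^ j)
              * (1 - PowerSeries.X) ^ 2) ^ 2 * (PowerSeries.X ^ d * Efac) := by
          rw [hD, Efac]; ring
      _ = (PowerSeries.C ((d : ℚ) + 1) - PowerSeries.C ((d : ℚ) + 2) * PowerSeries.X
            + PowerSeries.X ^ (d + 2)) ^ 2 * (PowerSeries.X ^ d * Efac) := by rw [hq]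
      _ = g1 d + (g2 d + (g3 d + (g4 d + (g5 d + g6 d)))) := by
          simp only [g1, g2, g3, g4, g5, g6, a1, a2, a3, a4, a5,
            map_mul, map_add, map_pow, map_neg, map_one, map_ofNat]
          ring
  rw [hfd, seriesSum_add, seriesSum_add, seriesSum_add, seriesSum_add, seriesSum_add]
  have hS1 : seriesSum g1 = Sb a1 1 * Efac := (seriesSum_mul _ _ (base_order a1 1 one_pos)).symm
  have hS2 : seriesSum g2 = Sb a2 1 * (PowerSeries.X * Efac) :=
    (seriesSum_mul _ _ (base_order a2 1 one_pos)).symm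
  have hS3 : seriesSum g3 = Sb a3 1 * (PowerSeries.X ^ 2 * Efac) :=
    (seriesSum_mul _ _ (base_order a3 1 one_pos)).symm
  have hS4 : seriesSum g4 = Sb a4 2 * (PowerSeries.X ^ 2 * Efac) :=
    (seriesSum_mul _ _ (base_order a4 2 two_pos)).symm
  have hS5 : seriesSum g5 = Sb a5 2 * (PowerSeries.X ^ 3 * Efac) :=
    (seriesSum_mul _ _ (base_order a5 2 two_pos)).symm
  have hS6 : seriesSum g6 = Sb (fun _ => 1) 3 * (PowerSeries.X ^ 4 * Efac) :=
    (seriesSum_mul _ _ (base_order (fun _ => 1) 3 three_pos)).symm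
  rw [hS1, hS2, hS3, hS4, hS5, hS6]
  have hA1 : Sb a1 1 * (1 - PowerSeries.X) ^ 3 = 1 + PowerSeries.X := by
    rw [cubic_id a1 (by intro n; simp only [a1]; push_cast; ring)]
    norm_num [a1]
    try simp only [map_ofNat]
    try ring
  have hA2 : Sb a2 1 * (1 - PowerSeries.X) ^ 3 = -4 := by
    rw [cubic_id a2 (by intro n; simp only [a2]; push_cast; ring)]
    norm_num [a2]
    try simp only [map_ofNat]
    try ring
  have hA3 : Sb a3 1 * (1 - PowerSeries.X) ^ 3
      = 4 - 3 * PowerSeries.X + PowerSeries.X ^ 2 := by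
    rw [cubic_id a3 (by intro n; simp only [a3]; push_cast; ring)]
    norm_num [a3]
    try simp only [map_ofNat]
    try ring
  have hA4 : Sb a4 2 * (1 - PowerSeries.X ^ 2) ^ 2 = 2 := by
    rw [quad_id a4 (by intro n; simp only [a4]; push_cast; ring)]
    norm_num [a4]
    try simp only [map_ofNat]
    try ring
  have hA5 : Sb a5 2 * (1 - PowerSeries.X ^ 2) ^ 2 = -4 + 2 * PowerSeries.X ^ 2 := by
    rw [quad_id a5 (by intro n; simp only [a5]; push_cast; ring)]
    norm_num [a5]
    try simp only [map_ofNat]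
    try ring
  have hA6 := geom3_id
  rw [Efac]
  linear_combination
    ((1 + PowerSeries.X) ^ 4 * (1 - PowerSeries.X) * (1 - PowerSeries.X ^ 3)) * hA1
    + (PowerSeries.X * (1 + PowerSeries.X) ^ 4 * (1 - PowerSeries.X)
        * (1 - PowerSeries.X ^ 3)) * hA2
    + (PowerSeries.X ^ 2 * (1 + PowerSeries.X) ^ 4 * (1 - PowerSeries.X)
        * (1 - PowerSeries.X ^ 3)) * hA3
    + (PowerSeries.X ^ 2 * (1 - PowerSeries.X ^ 2) ^ 2 * (1 - PowerSeries.X ^ 3)) * hA4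
    + (PowerSeries.X ^ 3 * (1 - PowerSeries.X ^ 2) ^ 2 * (1 - PowerSeries.X ^ 3)) * hA5
    + (PowerSeries.X ^ 4 * (1 - PowerSeries.X ^ 2) ^ 4) * hA6
end
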